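/- For the N-qubit one-axis twisted state |ψ⟩ = exp(-iθ J_x²/2)|1⟩^{⊗N} (N ≥ 2), one has ⟨σ_{1+}σ_{2-}⟩ = (1 - cos^{N-2}θ)/8, where σ_± = (σ_x ± iσ_y)/2. -/

import Mathlib

open Matrix Complex Finset

noncomputable section OneAxisTwisting

/-- Pauli x matrix in the basis `{|0⟩, |1⟩}`. -/
def pauliX : Matrix (Fin 2) (Fin 2) ℂ := !![0, 1; 1, 0]

/-- Pauli z matrix in the basis `{|0⟩, |1⟩}`. -/
def pauliZ : Matrix (Fin 2) (Fin 2) ℂ := !![1, 0; 0, -1]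

/-- The single-qubit operator `m` acting on site `k` of `N` qubits (identity elsewhere),
as a matrix on the computational basis indexed by `Fin N → Fin 2`. -/
def siteOp (N : ℕ) (k : Fin N) (m : Matrix (Fin 2) (Fin 2) ℂ) :
    Matrix (Fin N → Fin 2) (Fin N → Fin 2) ℂ :=
  Matrix.of fun s t =>
    m (s k) (t k) * ∏ j ∈ Finset.univ.erase k, (if s j = t j then (1 : ℂ) else 0)

/-- The collective spin operator `J_x = (1/2) Σ_k σ_{k,x}`. -/
def Jx (N : ℕ) : Matrix (Fin N → Fin 2) (Fin N → Fin 2) ℂ :=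
  (1 / 2 : ℂ) • ∑ k : Fin N, siteOp N k pauliX

/-- The all-down state `|1⟩^{⊗N}` as a vector. -/
def allDown (N : ℕ) : (Fin N → Fin 2) → ℂ :=
  fun s => if s = (fun _ => 1) then 1 else 0

/-- The one-axis twisted state `exp(-iθ J_x²/2) |1⟩^{⊗N}`. -/
def oneAxisTwisted (N : ℕ) (θ : ℝ) : (Fin N → Fin 2) → ℂ :=
  (NormedSpace.exp ((-(θ / 2 : ℂ) * Complex.I) • (Jx N * Jx N))).mulVec (allDown N)

/-- Expectation value `⟨ψ|O|ψ⟩` in the one-axis twisted state. -/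
def expVal (N : ℕ) (θ : ℝ) (O : Matrix (Fin N → Fin 2) (Fin N → Fin 2) ℂ) : ℂ :=
  star (oneAxisTwisted N θ) ⬝ᵥ O.mulVec (oneAxisTwisted N θ)


/-- Raising operator `σ₊ = (σ_x + iσ_y)/2 = |0⟩⟨1|`. -/
def pauliPlus : Matrix (Fin 2) (Fin 2) ℂ := !![0, 1; 0, 0]

/-- Lowering operator `σ₋ = (σ_x - iσ_y)/2 = |1⟩⟨0|`. -/
def pauliMinus : Matrix (Fin 2) (Fin 2) ℂ := !![0, 0; 1, 0]

/-!
Conjugating by the Hadamard transform `H = h^{⊗N}` turns `J_x` into the diagonal operator `J_z`,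
so `ψ = H w` with `w(s) = exp(-iθ m(s)²/2) ∏_k (±1/√2)`, where `2 m(s)` is the sum of the spins
of `s`, while `H σ_{1+} σ_{2-} H` acts only on the first two qubits, with rank one there.
In `⟨w|H σ_{1+} σ_{2-} H|w⟩` the remaining `N - 2` spins are shared by bra and ket, so the phase
difference is linear in their spin sum and the sum over them factorises into a power
`(2 cosh …)^{N-2}`. Only the configurations with both of the first two spins equal survive the
signs, and flipping them between bra and ket contributes `cos^{N-2} θ`.
-/

theorem Fin.sum_univ_pi_succ {k : ℕ} {α β : Type*} [Fintype α] [AddCommMonoid β]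
    (f : (Fin (k + 1) → α) → β) : ∑ x, f x = ∑ a, ∑ r, f (Fin.cons a r) := by
  rw [← (Fin.consEquiv fun _ => α).sum_comp, Fintype.sum_prod_type]
  rfl

section PiKron

variable {ι n R : Type*} [Fintype ι] [CommSemiring R]

def piKron (m : ι → Matrix n n R) : Matrix (ι → n) (ι → n) R :=
  of fun s t => ∏ i, m i (s i) (t i)

theorem piKron_mul [DecidableEq ι] [Fintype n] (m m' : ι → Matrix n n R) :
    piKron m * piKron m' = piKron fun i => m i * m' i := by
  ext s t
  simp only [piKron, mul_apply, of_apply, ← prod_mul_distrib]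
  rw [prod_univ_sum, Fintype.piFinset_univ]

theorem piKron_one [DecidableEq n] : piKron (1 : ι → Matrix n n R) = 1 := by
  ext s t
  simp only [piKron, of_apply, Pi.one_apply, one_apply, Fintype.prod_boole, funext_iff]

theorem conjTranspose_piKron [StarRing R] (m : ι → Matrix n n R) :
    (piKron m)ᴴ = piKron fun i => (m i)ᴴ := by
  ext s t
  simp [piKron, conjTranspose_apply]

theorem piKron_cons_apply {k : ℕ} (m : Matrix n n R) (g : Fin k → Matrix n n R)
    (a b : n) (s t : Fin k → n) :
    piKron (Fin.cons m g : Fin (k + 1) → Matrix n n R) (Fin.cons a s) (Fin.cons b t) =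
      m a b * piKron g s t := by
  simp [piKron, Fin.prod_univ_succ]

theorem dotProduct_piKron_cons_mulVec [Fintype n] {k : ℕ}
    (m : Matrix n n R) (g : Fin k → Matrix n n R) (u v : (Fin (k + 1) → n) → R) :
    u ⬝ᵥ piKron (Fin.cons m g : Fin (k + 1) → Matrix n n R) *ᵥ v =
      ∑ a, ∑ b, m a b * ((fun r => u (Fin.cons a r)) ⬝ᵥ piKron g *ᵥ fun r => v (Fin.cons b r)) := by
  simp only [dotProduct, mulVec, Fin.sum_univ_pi_succ (k := k), piKron_cons_apply, mul_sum]
  refine sum_congr rfl fun a _ => ?_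
  rw [sum_comm]
  refine sum_congr rfl fun b _ => sum_congr rfl fun r _ => sum_congr rfl fun r' _ => ?_
  ring

end PiKron

theorem siteOp_eq_piKron (N : ℕ) (k : Fin N) (m : Matrix (Fin 2) (Fin 2) ℂ) :
    siteOp N k m = piKron (Function.update 1 k m) := by
  ext s t
  simp only [siteOp, piKron, of_apply]
  rw [← mul_prod_erase univ _ (mem_univ k), Function.update_self]
  congr 1
  refine prod_congr rfl fun j hj => ?_
  rw [Function.update_of_ne (ne_of_mem_erase hj), Pi.one_apply, one_apply]

def spinSign : Fin 2 → ℂ := ![1, -1]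

@[simp] theorem spinSign_mul_self (j : Fin 2) : spinSign j * spinSign j = 1 := by
  fin_cases j <;> simp [spinSign]

@[simp] theorem star_spinSign (j : Fin 2) : star (spinSign j) = spinSign j := by
  fin_cases j <;> simp [spinSign]

theorem pauliZ_eq_diagonal : pauliZ = diagonal spinSign := by
  ext i j
  fin_cases i <;> fin_cases j <;> simp [pauliZ, spinSign]

def hadamardGate : Matrix (Fin 2) (Fin 2) ℂ := (√2 : ℂ)⁻¹ • !![1, 1; 1, -1]

theorem inv_sqrt_two_mul_self : (√2 : ℂ)⁻¹ * (√2 : ℂ)⁻¹ = 2⁻¹ := by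
  rw [← mul_inv, ← ofReal_mul, Real.mul_self_sqrt zero_le_two, ofReal_ofNat]

theorem hadamardGate_mul_self : hadamardGate * hadamardGate = 1 := by
  rw [hadamardGate, smul_mul_smul_comm, inv_sqrt_two_mul_self]
  ext i j
  fin_cases i <;> fin_cases j <;> norm_num [mul_apply, Fin.sum_univ_two, one_apply]

theorem conjTranspose_hadamardGate : hadamardGateᴴ = hadamardGate := by
  ext i j
  fin_cases i <;> fin_cases j <;> simp [hadamardGate]

theorem hadamardGate_apply_one (j : Fin 2) : hadamardGate j 1 = (√2 : ℂ)⁻¹ * spinSign j := by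
  fin_cases j <;> simp [hadamardGate, spinSign]

theorem hadamardGate_conj_pauliX : hadamardGate * pauliX * hadamardGate = pauliZ := by
  rw [hadamardGate, smul_mul, smul_mul_smul_comm, inv_sqrt_two_mul_self]
  ext i j
  fin_cases i <;> fin_cases j <;> norm_num [pauliX, pauliZ, mul_apply, Fin.sum_univ_two]

theorem hadamardGate_conj_pauliPlus :
    hadamardGate * pauliPlus * hadamardGate = of fun _ j => spinSign j / 2 := by
  rw [hadamardGate, smul_mul, smul_mul_smul_comm, inv_sqrt_two_mul_self]
  ext i j
  fin_cases i <;> fin_cases j <;> norm_num [pauliPlus, spinSign, mul_apply, Fin.sum_univ_two]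

theorem hadamardGate_conj_pauliMinus :
    hadamardGate * pauliMinus * hadamardGate = of fun i _ => spinSign i / 2 := by
  rw [hadamardGate, smul_mul, smul_mul_smul_comm, inv_sqrt_two_mul_self]
  ext i j
  fin_cases i <;> fin_cases j <;> norm_num [pauliMinus, spinSign, mul_apply, Fin.sum_univ_two]

def hadamardTensor (N : ℕ) : Matrix (Fin N → Fin 2) (Fin N → Fin 2) ℂ :=
  piKron fun _ => hadamardGate

theorem hadamardTensor_mul_self (N : ℕ) : hadamardTensor N * hadamardTensor N = 1 := by
  rw [hadamardTensor, piKron_mul, hadamardGate_mul_self]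
  exact piKron_one

@[simp] theorem hadamardTensor_mul_hadamardTensor_mul (N : ℕ)
    (A : Matrix (Fin N → Fin 2) (Fin N → Fin 2) ℂ) :
    hadamardTensor N * (hadamardTensor N * A) = A := by
  rw [← Matrix.mul_assoc, hadamardTensor_mul_self, Matrix.one_mul]

theorem conjTranspose_hadamardTensor (N : ℕ) : (hadamardTensor N)ᴴ = hadamardTensor N := by
  rw [hadamardTensor, conjTranspose_piKron, conjTranspose_hadamardGate]

theorem hadamardTensor_conj_piKron (N : ℕ) (m : Fin N → Matrix (Fin 2) (Fin 2) ℂ) :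
    hadamardTensor N * piKron m * hadamardTensor N =
      piKron fun k => hadamardGate * m k * hadamardGate := by
  rw [hadamardTensor, piKron_mul, piKron_mul]

theorem hadamardTensor_conj_siteOp (N : ℕ) (k : Fin N) (m : Matrix (Fin 2) (Fin 2) ℂ) :
    hadamardTensor N * siteOp N k m * hadamardTensor N =
      siteOp N k (hadamardGate * m * hadamardGate) := by
  rw [siteOp_eq_piKron, siteOp_eq_piKron, hadamardTensor_conj_piKron]
  congr 1
  funext j
  rcases eq_or_ne j k with rfl | hjk
  · simp
  · simp [Function.update_of_ne hjk, hadamardGate_mul_self]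

theorem siteOp_diagonal (N : ℕ) (k : Fin N) (d : Fin 2 → ℂ) :
    siteOp N k (diagonal d) = diagonal fun s => d (s k) := by
  ext s t
  simp only [siteOp, of_apply, diagonal_apply]
  by_cases hst : s = t
  · simp [hst]
  · obtain ⟨j, hj⟩ : ∃ j, s j ≠ t j := Function.ne_iff.mp hst
    rcases eq_or_ne j k with rfl | hjk
    · simp [hst, hj]
    · rw [if_neg hst, prod_eq_zero (mem_erase.2 ⟨hjk, mem_univ j⟩) (if_neg hj), mul_zero]

def totalSpin {N : ℕ} (s : Fin N → Fin 2) : ℂ := ∑ k, spinSign (s k)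

theorem hadamardTensor_conj_Jx (N : ℕ) :
    hadamardTensor N * Jx N * hadamardTensor N = diagonal fun s => totalSpin s / 2 := by
  rw [Jx, Matrix.mul_smul, Matrix.smul_mul, mul_sum, sum_mul]
  simp only [hadamardTensor_conj_siteOp, hadamardGate_conj_pauliX, pauliZ_eq_diagonal,
    siteOp_diagonal]
  ext s t
  by_cases hst : s = t <;> simp [Matrix.sum_apply, hst, totalSpin, div_eq_inv_mul]

theorem Matrix.exp_conj_of_mul_self_eq_one {m 𝔸 : Type*} [Fintype m] [DecidableEq m]
    [NormedCommRing 𝔸] [NormedAlgebra ℚ 𝔸] [CompleteSpace 𝔸] {U : Matrix m m 𝔸}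
    (hU : U * U = 1) (A : Matrix m m 𝔸) :
    NormedSpace.exp (U * A * U) = U * NormedSpace.exp A * U := by
  have hinv : U⁻¹ = U := inv_eq_left_inv hU
  simpa only [hinv] using exp_conj U A ⟨⟨U, U, hU, hU⟩, rfl⟩

theorem Jx_eq_hadamardTensor_conj (N : ℕ) :
    Jx N = hadamardTensor N * diagonal (fun s => totalSpin s / 2) * hadamardTensor N := by
  rw [← hadamardTensor_conj_Jx]
  simp only [← Matrix.mul_assoc, hadamardTensor_mul_self, Matrix.one_mul]
  rw [Matrix.mul_assoc, hadamardTensor_mul_self, Matrix.mul_one]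

theorem exp_smul_Jx_mul_Jx (N : ℕ) (c : ℂ) :
    NormedSpace.exp (c • (Jx N * Jx N)) =
      hadamardTensor N * diagonal (fun s => Complex.exp (c * (totalSpin s / 2) ^ 2)) *
        hadamardTensor N := by
  have hsq : c • (Jx N * Jx N) = hadamardTensor N *
      diagonal (fun s => c * (totalSpin s / 2) ^ 2) * hadamardTensor N := by
    simp only [Jx_eq_hadamardTensor_conj, Matrix.mul_assoc, hadamardTensor_mul_hadamardTensor_mul]
    rw [← Matrix.mul_assoc (diagonal _), diagonal_mul_diagonal, ← Matrix.mul_smul,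
      ← Matrix.smul_mul, ← diagonal_smul]
    congr 3
    funext s
    simp only [Pi.smul_apply, smul_eq_mul, sq]
  rw [hsq, exp_conj_of_mul_self_eq_one (hadamardTensor_mul_self N), exp_diagonal,
    Pi.exp_def, Complex.exp_eq_exp_ℂ]

theorem star_mulVec_dotProduct_mulVec {m R : Type*} [Fintype m] [CommSemiring R] [StarRing R]
    (U O : Matrix m m R) (w : m → R) :
    star (U *ᵥ w) ⬝ᵥ O *ᵥ (U *ᵥ w) = star w ⬝ᵥ (Uᴴ * O * U) *ᵥ w := by
  rw [star_mulVec, ← dotProduct_mulVec, mulVec_mulVec, mulVec_mulVec, Matrix.mul_assoc]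

def twistedAmp (N : ℕ) (θ : ℝ) (s : Fin N → Fin 2) : ℂ :=
  Complex.exp (-(θ / 2 : ℂ) * I * (totalSpin s / 2) ^ 2) *
    ((√2 : ℂ)⁻¹ ^ N * ∏ k, spinSign (s k))

theorem oneAxisTwisted_eq_mulVec (N : ℕ) (θ : ℝ) :
    oneAxisTwisted N θ = hadamardTensor N *ᵥ twistedAmp N θ := by
  rw [oneAxisTwisted, exp_smul_Jx_mul_Jx, ← mulVec_mulVec, ← mulVec_mulVec]
  congr 1
  funext s
  simp [mulVec, dotProduct, allDown, diagonal_apply, hadamardTensor, piKron, hadamardGate_apply_one,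
    prod_mul_distrib, twistedAmp]

theorem expVal_eq (N : ℕ) (θ : ℝ) (O : Matrix (Fin N → Fin 2) (Fin N → Fin 2) ℂ) :
    expVal N θ O =
      star (twistedAmp N θ) ⬝ᵥ (hadamardTensor N * O * hadamardTensor N) *ᵥ twistedAmp N θ := by
  rw [expVal, oneAxisTwisted_eq_mulVec, star_mulVec_dotProduct_mulVec,
    conjTranspose_hadamardTensor]

theorem hadamardTensor_conj_sigma_pm (M : ℕ) :
    hadamardTensor (M + 2) * (siteOp (M + 2) 0 pauliPlus * siteOp (M + 2) 1 pauliMinus) *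
        hadamardTensor (M + 2) =
      piKron (Fin.cons (of fun _ j => spinSign j / 2)
        (Fin.cons (of fun i _ => spinSign i / 2) 1)) := by
  rw [siteOp_eq_piKron, siteOp_eq_piKron, piKron_mul, hadamardTensor_conj_piKron]
  congr 1
  funext k
  refine Fin.cases ?_ (Fin.cases ?_ fun k => ?_) k
  · simp [hadamardGate_conj_pauliPlus]
  · simp [hadamardGate_conj_pauliMinus]
  · simp [Fin.ext_iff, hadamardGate_mul_self]

@[simp] theorem star_totalSpin {N : ℕ} (s : Fin N → Fin 2) : star (totalSpin s) = totalSpin s := by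
  simp [totalSpin]

@[simp] theorem totalSpin_cons {k : ℕ} (a : Fin 2) (r : Fin k → Fin 2) :
    totalSpin (Fin.cons a r : Fin (k + 1) → Fin 2) = spinSign a + totalSpin r := by
  simp [totalSpin, Fin.sum_univ_succ]

theorem sum_exp_mul_totalSpin (M : ℕ) (z : ℂ) :
    ∑ r : Fin M → Fin 2, Complex.exp (z * totalSpin r) = (2 * Complex.cosh z) ^ M := by
  simp only [totalSpin, mul_sum, Complex.exp_sum]
  rw [← Fintype.prod_sum (fun (_ : Fin M) j => Complex.exp (z * spinSign j)), prod_const, card_univ,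
    Fintype.card_fin, two_cosh]
  simp [Fin.sum_univ_two, spinSign]

theorem star_twistedAmp_mul (N : ℕ) (θ : ℝ) (x y : Fin N → Fin 2) :
    star (twistedAmp N θ x) * twistedAmp N θ y =
      2⁻¹ ^ N * (∏ k, spinSign (x k) * spinSign (y k)) *
        Complex.exp (-(θ / 2 : ℂ) * I * ((totalSpin y ^ 2 - totalSpin x ^ 2) / 4)) := by
  have hexp : star (Complex.exp (-(θ / 2 : ℂ) * I * (totalSpin x / 2) ^ 2)) *
      Complex.exp (-(θ / 2 : ℂ) * I * (totalSpin y / 2) ^ 2) =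
        Complex.exp (-(θ / 2 : ℂ) * I * ((totalSpin y ^ 2 - totalSpin x ^ 2) / 4)) := by
    rw [Complex.star_def, ← Complex.exp_conj, ← Complex.exp_add]
    congr 1
    simp only [map_mul, map_neg, map_div₀, map_pow, Complex.conj_ofReal, Complex.conj_I,
      ← Complex.star_def, star_totalSpin, map_ofNat]
    ring
  have hnorm : star ((√2 : ℂ)⁻¹ ^ N) * (√2 : ℂ)⁻¹ ^ N = 2⁻¹ ^ N := by
    rw [Complex.star_def, map_pow, map_inv₀, Complex.conj_ofReal, ← mul_pow,
      inv_sqrt_two_mul_self]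
  simp only [twistedAmp, star_mul', star_prod, star_spinSign, prod_mul_distrib]
  rw [← hexp, ← hnorm]
  ring

-- Up to signs and normalisation, `∑_r conj (w (p, r)) * w (q, r)` over the last `M` spins, when
-- the first two spins sum to `p` in the bra and to `q` in the ket.
def blockOverlap (θ : ℝ) (M : ℕ) (p q : ℂ) : ℂ :=
  Complex.exp (-(θ / 2 : ℂ) * I * ((q ^ 2 - p ^ 2) / 4)) *
    (2 * Complex.cosh (-(θ / 2 : ℂ) * I * ((q - p) / 2))) ^ M

theorem dotProduct_star_twistedAmp_cons (M : ℕ) (θ : ℝ) (a₀ a₁ b₀ b₁ : Fin 2) :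
    (fun r => star (twistedAmp (M + 2) θ (Fin.cons a₀ (Fin.cons a₁ r)))) ⬝ᵥ
        (fun r => twistedAmp (M + 2) θ (Fin.cons b₀ (Fin.cons b₁ r))) =
      2⁻¹ ^ (M + 2) * (spinSign a₀ * spinSign a₁ * (spinSign b₀ * spinSign b₁)) *
        blockOverlap θ M (spinSign a₀ + spinSign a₁) (spinSign b₀ + spinSign b₁) := by
  have hsplit : ∀ R : ℂ,
      Complex.exp (-(θ / 2 : ℂ) * I * (((spinSign b₀ + (spinSign b₁ + R)) ^ 2 -
        (spinSign a₀ + (spinSign a₁ + R)) ^ 2) / 4)) =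
          Complex.exp (-(θ / 2 : ℂ) * I * (((spinSign b₀ + spinSign b₁) ^ 2 -
            (spinSign a₀ + spinSign a₁) ^ 2) / 4)) *
          Complex.exp (-(θ / 2 : ℂ) * I * (((spinSign b₀ + spinSign b₁) -
            (spinSign a₀ + spinSign a₁)) / 2) * R) := by
    intro R
    rw [← Complex.exp_add]
    congr 1
    ring
  simp only [dotProduct, star_twistedAmp_mul, Fin.prod_univ_succ, Fin.cons_zero, Fin.cons_succ,
    spinSign_mul_self, prod_const_one, totalSpin_cons, hsplit, ← mul_sum, sum_exp_mul_totalSpin,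
    blockOverlap]
  ring

theorem sum_spinSign_mul_spinSign (f : ℂ → ℂ → ℂ) :
    ∑ a₀, ∑ a₁, ∑ b₀, ∑ b₁,
        spinSign a₀ * spinSign b₁ * f (spinSign a₀ + spinSign a₁) (spinSign b₀ + spinSign b₁) =
      f 2 2 - f 2 (-2) - (f (-2) 2 - f (-2) (-2)) := by
  simp only [Fin.sum_univ_two, spinSign]
  norm_num
  ring

theorem blockOverlap_alternating_sum (θ : ℝ) (M : ℕ) :
    blockOverlap θ M 2 2 - blockOverlap θ M 2 (-2) -
        (blockOverlap θ M (-2) 2 - blockOverlap θ M (-2) (-2)) =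
      2 * 2 ^ M * (1 - (Real.cos θ : ℂ) ^ M) := by
  have hcos : Complex.cosh (-(θ / 2 : ℂ) * I * ((-2 - 2) / 2)) = Real.cos θ := by
    rw [show -(θ / 2 : ℂ) * I * ((-2 - 2) / 2) = θ * I by ring, cosh_mul_I, ofReal_cos]
  have hcos' : Complex.cosh (-(θ / 2 : ℂ) * I * ((2 - -2) / 2)) = Real.cos θ := by
    rw [show -(θ / 2 : ℂ) * I * ((2 - -2) / 2) = -(θ * I) by ring, cosh_neg, cosh_mul_I,
      ofReal_cos]
  simp only [blockOverlap, hcos, hcos', sub_self, zero_div, mul_zero, Complex.exp_zero,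
    Complex.cosh_zero, neg_sq]
  ring

theorem expVal_sigma_pm_eq_sum (M : ℕ) (θ : ℝ) :
    expVal (M + 2) θ (siteOp (M + 2) 0 pauliPlus * siteOp (M + 2) 1 pauliMinus) =
      2⁻¹ ^ M / 16 * ∑ a₀, ∑ a₁, ∑ b₀, ∑ b₁, spinSign a₀ * spinSign b₁ *
        blockOverlap θ M (spinSign a₀ + spinSign a₁) (spinSign b₀ + spinSign b₁) := by
  have hterm : ∀ a₀ a₁ b₀ b₁ : Fin 2, spinSign b₀ / 2 * (spinSign a₁ / 2 *
      (2⁻¹ ^ (M + 2) * (spinSign a₀ * spinSign a₁ * (spinSign b₀ * spinSign b₁)) *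
        blockOverlap θ M (spinSign a₀ + spinSign a₁) (spinSign b₀ + spinSign b₁))) =
      2⁻¹ ^ M / 16 * (spinSign a₀ * spinSign b₁ *
        blockOverlap θ M (spinSign a₀ + spinSign a₁) (spinSign b₀ + spinSign b₁)) := by
    intro a₀ a₁ b₀ b₁
    generalize blockOverlap θ M _ _ = F
    linear_combination 2⁻¹ ^ M / 16 * spinSign a₀ * spinSign b₁ * F *
      (spinSign b₀ * spinSign b₀ * spinSign_mul_self a₁ + spinSign_mul_self b₀)
  simp only [expVal_eq, hadamardTensor_conj_sigma_pm, dotProduct_piKron_cons_mulVec, piKron_one,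
    one_mulVec, of_apply, Pi.star_apply, dotProduct_star_twistedAmp_cons, mul_sum, hterm]
  rw [sum_congr rfl fun _ _ => sum_comm]

/-- For the one-axis twisted state on `N ≥ 2` qubits,
`⟨σ_{1+} σ_{2-}⟩ = (1 - cos^{N-2} θ)/8`. -/
theorem oneAxisTwisted_sigma_pm (N : ℕ) (hN : 2 ≤ N) (θ : ℝ) :
    expVal N θ (siteOp N ⟨0, by omega⟩ pauliPlus * siteOp N ⟨1, by omega⟩ pauliMinus) =
      (1 - ((Real.cos θ : ℂ)) ^ (N - 2)) / 8 := by
  obtain ⟨M, rfl⟩ : ∃ M, N = M + 2 := ⟨N - 2, by omega⟩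
  rw [Nat.add_sub_cancel]
  change expVal (M + 2) θ (siteOp (M + 2) 0 pauliPlus * siteOp (M + 2) 1 pauliMinus) = _
  rw [expVal_sigma_pm_eq_sum, sum_spinSign_mul_spinSign (blockOverlap θ M),
    blockOverlap_alternating_sum, inv_pow]
  field_simp
  ring

end OneAxisTwisting
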